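/- Let k ≥ 0 be an integer, let 1 < p < ∞, let 0 < ε < 1, and let m > k. Then ∫_{|ω|<ε} |ω|^{−pk} ((1/(2π)) M_m(ω/2 + π))^{p/2} dω ≤ 2^{−p(1/2+k)+1} · (c_m/π)^{p/2} · (ε/2)^{pm−pk+1}. -/

import Mathlib

/-!
Since `sin u ^ (2m-1)` is odd and changes sign under `u ↦ u + π`, and `c_m` normalises the integral
over `[0, π]`, we get `M_m(x + π) = c_m ∫_0^x sin^{2m-1}`, which lies between `0` and `c_m |x|^{2m}`
for `|x| ≤ π` because `|sin u| ≤ |u|`. Hence the integrand is at most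
`2^{-p(1/2+k)} (c_m/π)^{p/2} |ω/2|^q` with `q = p(m-k) ≥ 1`, whose integral over `(-ε, ε)` is
`4 (ε/2)^{q+1}/(q+1) ≤ 2 (ε/2)^{q+1}`.
-/

open MeasureTheory Filter
open scoped Topology

/-- `c_m = (∫_0^π sin^{2m-1} u du)⁻¹`. -/
noncomputable def cm (m : ℕ) : ℝ :=
  (∫ u in (0:ℝ)..Real.pi, Real.sin u ^ (2 * m - 1))⁻¹

/-- `M_m(ω) = 1 - c_m ∫_0^ω sin^{2m-1} u du`, i.e. `|H_m(ω)|²` for the Daubechies filter. -/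
noncomputable def Mm (m : ℕ) (ω : ℝ) : ℝ :=
  1 - cm m * ∫ u in (0:ℝ)..ω, Real.sin u ^ (2 * m - 1)

open Real intervalIntegral

section SinPow

variable {n : ℕ}

theorem integral_sin_pow_neg (hn : Odd n) (x : ℝ) :
    ∫ u in 0..-x, sin u ^ n = ∫ u in 0..x, sin u ^ n := by
  have h := integral_comp_neg (a := 0) (b := x) fun u => sin u ^ n
  simp only [sin_neg, hn.neg_pow, intervalIntegral.integral_neg, neg_zero] at h
  rw [integral_symm, ← h, neg_neg]

theorem integral_sin_pow_add_pi (hn : Odd n) (x : ℝ) :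
    ∫ u in 0..x + π, sin u ^ n = (∫ u in 0..π, sin u ^ n) - ∫ u in 0..x, sin u ^ n := by
  have hshift := integral_comp_add_right (a := 0) (b := x) (fun u => sin u ^ n) π
  simp only [sin_add_pi, hn.neg_pow, intervalIntegral.integral_neg, zero_add] at hshift
  have hint (a b : ℝ) : IntervalIntegrable (fun u => sin u ^ n) volume a b :=
    (continuous_sin.pow n).intervalIntegrable a b
  rw [← integral_add_adjacent_intervals (hint 0 π) (hint π (x + π)), ← hshift]
  ring

theorem abs_integral_sin_pow_le (x : ℝ) :
    |∫ u in 0..x, sin u ^ n| ≤ |x| ^ (n + 1) := by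
  have h := norm_integral_le_of_norm_le_const (a := 0) (b := x) (C := |x| ^ n)
    (f := fun u => sin u ^ n) fun u hu => by
      have hux : |u| ≤ |x| := by
        rcases Set.mem_uIoc.1 hu with ⟨h0, hx⟩ | ⟨hx, h0⟩
        · exact abs_le_abs hx (by linarith)
        · exact abs_le_abs_of_nonpos h0 hx.le
      rw [norm_pow, norm_eq_abs]
      exact pow_le_pow_left₀ (abs_nonneg _) (abs_sin_le_abs.trans hux) n
  simpa [pow_succ] using h

theorem integral_sin_pow_nonneg (hn : Odd n) {x : ℝ} (hx : |x| ≤ π) :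
    0 ≤ ∫ u in 0..x, sin u ^ n := by
  wlog h : 0 ≤ x generalizing x
  · rw [← integral_sin_pow_neg hn]
    exact this (by rwa [abs_neg]) (by linarith)
  exact integral_nonneg h fun u hu =>
    pow_nonneg (sin_nonneg_of_nonneg_of_le_pi hu.1 (hu.2.trans ((le_abs_self x).trans hx))) n

end SinPow

theorem integral_abs_rpow_symm {c q : ℝ} (hc : 0 ≤ c) (hq : 0 ≤ q) :
    ∫ x in -c..c, |x| ^ q = 2 * (c ^ (q + 1) / (q + 1)) := by
  have hint (a b : ℝ) : IntervalIntegrable (fun x => |x| ^ q) volume a b :=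
    (continuous_abs.rpow_const fun _ => Or.inr hq).intervalIntegrable a b
  have hneg : ∫ x in -c..0, |x| ^ q = ∫ x in 0..c, |x| ^ q := by
    simpa only [abs_neg, neg_zero] using
      (integral_comp_neg (a := 0) (b := c) fun x => |x| ^ q).symm
  have hpos : ∫ x in 0..c, |x| ^ q = c ^ (q + 1) / (q + 1) := by
    rw [integral_congr (g := fun x => x ^ q) fun x hx => by
      rw [Set.uIcc_of_le hc] at hx
      simp only [abs_of_nonneg hx.1]]
    rw [integral_rpow (Or.inl (by linarith)), zero_rpow (by linarith), sub_zero]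
  rw [← integral_add_adjacent_intervals (hint (-c) 0) (hint 0 c), hneg, hpos]
  ring

theorem cm_pos (m : ℕ) : 0 < cm m := inv_pos.mpr (integral_sin_pow_pos _)

section Mm

variable {m : ℕ}

theorem Mm_add_pi (hm : 1 ≤ m) (x : ℝ) :
    Mm m (x + π) = cm m * ∫ u in 0..x, sin u ^ (2 * m - 1) := by
  have hodd : Odd (2 * m - 1) := ⟨m - 1, by omega⟩
  rw [Mm, integral_sin_pow_add_pi hodd, mul_sub, cm, inv_mul_cancel₀ (integral_sin_pow_pos _).ne']
  ring

theorem Mm_add_pi_nonneg (hm : 1 ≤ m) {x : ℝ} (hx : |x| ≤ π) : 0 ≤ Mm m (x + π) := by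
  rw [Mm_add_pi hm]
  exact mul_nonneg (cm_pos m).le (integral_sin_pow_nonneg ⟨m - 1, by omega⟩ hx)

theorem Mm_add_pi_le (hm : 1 ≤ m) (x : ℝ) : Mm m (x + π) ≤ cm m * |x| ^ (2 * m) := by
  rw [Mm_add_pi hm]
  calc cm m * ∫ u in 0..x, sin u ^ (2 * m - 1)
      ≤ cm m * |∫ u in 0..x, sin u ^ (2 * m - 1)| :=
        mul_le_mul_of_nonneg_left (le_abs_self _) (cm_pos m).le
    _ ≤ cm m * |x| ^ (2 * m - 1 + 1) :=
        mul_le_mul_of_nonneg_left (abs_integral_sin_pow_le x) (cm_pos m).le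
    _ = cm m * |x| ^ (2 * m) := by rw [Nat.sub_add_cancel (by omega)]

end Mm

theorem abs_rpow_mul_Mm_rpow_le {m k : ℕ} {p : ℝ} (hp : 0 < p) (hkm : k < m) {ω : ℝ}
    (hω : |ω / 2| ≤ π) :
    |ω| ^ (-(p * k)) * ((1 / (2 * π)) * Mm m (ω / 2 + π)) ^ (p / 2) ≤
      2 ^ (-p * (1 / 2 + k)) * (cm m / π) ^ (p / 2) * |ω / 2| ^ (p * m - p * k) := by
  have hm : 1 ≤ m := by omega
  have hω2 : |ω| = 2 * |ω / 2| := by rw [abs_div, abs_two]; ring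
  set t := |ω / 2|
  have ht : 0 ≤ t := abs_nonneg _
  have hc : 0 ≤ cm m / π := (div_pos (cm_pos m) pi_pos).le
  have hM : (1 / (2 * π)) * Mm m (ω / 2 + π) ≤ 2⁻¹ * (cm m / π) * t ^ (2 * m) := by
    have h := mul_le_mul_of_nonneg_left (Mm_add_pi_le hm (ω / 2))
      (by positivity : 0 ≤ 1 / (2 * π))
    exact h.trans_eq (by ring)
  have hexp : -(p * k) + p * (2 * m) * (1 / 2) = p * m - p * k := by ring
  have hq : 0 < p * m - p * k := by
    have : (k : ℝ) < m := by exact_mod_cast hkm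
    nlinarith
  calc _ ≤ (2 * t) ^ (-(p * k)) * (2⁻¹ * (cm m / π) * t ^ (2 * m)) ^ (p / 2) := by
        rw [hω2]
        gcongr
        exact mul_nonneg (by positivity) (Mm_add_pi_nonneg hm hω)
    _ = 2 ^ (-(p * k)) * 2⁻¹ ^ (p / 2) * (cm m / π) ^ (p / 2) *
          (t ^ (-(p * k)) * t ^ (p * (2 * m) * (1 / 2))) := by
        rw [mul_rpow (by norm_num) ht, mul_rpow (mul_nonneg (by norm_num) hc) (pow_nonneg ht _),
          mul_rpow (by norm_num) hc, ← rpow_natCast, ← rpow_mul ht]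
        push_cast
        ring_nf
    _ = _ := by
        rw [← rpow_add' ht (by rw [hexp]; exact hq.ne'), hexp, inv_rpow zero_le_two,
          ← rpow_neg zero_le_two, ← rpow_add two_pos]
        ring_nf

theorem stmt4 (k : ℕ) (p : ℝ) (hp : 1 < p) (ε : ℝ) (hε0 : 0 < ε) (hε1 : ε < 1)
    (m : ℕ) (hm : k < m) :
    ∫ ω in {ω : ℝ | |ω| < ε},
        |ω| ^ (-(p * (k : ℝ))) * ((1 / (2 * Real.pi)) * Mm m (ω / 2 + Real.pi)) ^ (p / 2) ≤
      2 ^ (-p * (1 / 2 + (k : ℝ)) + 1) * (cm m / Real.pi) ^ (p / 2) *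
        (ε / 2) ^ (p * (m : ℝ) - p * (k : ℝ) + 1) := by
  set q := p * m - p * k
  have hq : 1 ≤ q := by
    have : (k : ℝ) + 1 ≤ m := by exact_mod_cast hm
    nlinarith
  set A := 2 ^ (-p * (1 / 2 + (k : ℝ))) * (cm m / π) ^ (p / 2)
  have hA : 0 ≤ A :=
    mul_nonneg (rpow_nonneg zero_le_two _) (rpow_nonneg (div_pos (cm_pos m) pi_pos).le _)
  have hsmall : ∀ ω ∈ Set.Ioo (-ε) ε, |ω / 2| ≤ π := fun ω hω => by
    rw [abs_le]
    constructor <;> linarith [hω.1, hω.2, pi_gt_three]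
  have hcont : Continuous fun ω : ℝ => A * |ω / 2| ^ q :=
    continuous_const.mul ((continuous_id.div_const 2).abs.rpow_const fun _ => Or.inr (by linarith))
  have hset : {ω : ℝ | |ω| < ε} = Set.Ioo (-ε) ε := by ext; simp [abs_lt]
  rw [hset]
  calc _ ≤ ∫ ω in Set.Ioo (-ε) ε, A * |ω / 2| ^ q := by
        refine integral_mono_of_nonneg ?_
          (hcont.integrableOn_Icc.mono_set Set.Ioo_subset_Icc_self) ?_
        · filter_upwards [ae_restrict_mem measurableSet_Ioo] with ω hω
          exact mul_nonneg (rpow_nonneg (abs_nonneg _) _) (rpow_nonneg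
            (mul_nonneg (by positivity) (Mm_add_pi_nonneg (by omega) (hsmall ω hω))) _)
        · filter_upwards [ae_restrict_mem measurableSet_Ioo] with ω hω
          exact abs_rpow_mul_Mm_rpow_le (by linarith) hm (hsmall ω hω)
    _ = A * (4 * ((ε / 2) ^ (q + 1) / (q + 1))) := by
        rw [MeasureTheory.integral_const_mul, ← integral_Ioc_eq_integral_Ioo,
          ← integral_of_le (by linarith), integral_comp_div (fun t => |t| ^ q) two_ne_zero,
          neg_div, integral_abs_rpow_symm (by positivity) (by linarith), smul_eq_mul]
        ring
    _ ≤ A * (2 * (ε / 2) ^ (q + 1)) := by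
        refine mul_le_mul_of_nonneg_left ?_ hA
        rw [mul_div_assoc', div_le_iff₀ (by linarith)]
        nlinarith [rpow_nonneg (by positivity : (0:ℝ) ≤ ε / 2) (q + 1)]
    _ = _ := by rw [rpow_add_one two_ne_zero]; ring
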